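/- Let α be a complex number with Re(α) > −1/2 and let u_0 : ℂ[x] → ℂ be any linear functional satisfying u_0(P_k(·;α)) = δ_{0,k} for all k ≥ 0. Then the moments of u_0 are u_0(xⁿ) = ((α)_n)² / (2ⁿ (α+1/2)_n) for every n ≥ 0. -/

import Mathlib

/-!
The recursion reads `p_{n+1} = L p_n` for the second-order differential operator `L = pseqOp α`.
When `α + 1/2 ∉ -ℕ` the `p_n` have exact degree `n`, hence form a basis, so a functional with
`u(p_0) = 1` and `u(p_{k+1}) = 0` satisfies `u ∘ L = 0`. Since
`L xᵏ = (k + α)² xᵏ - (2k + 2α + 1) xᵏ⁺¹`, this yields the two-term recurrence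
`(2k + 2α + 1) u(xᵏ⁺¹) = (k + α)² u(xᵏ)`, solved by the stated ratio of Pochhammer symbols.
-/

open Polynomial

/-- The polynomials `p_n(x; α)` defined recursively by
`p_0 = 1`, `p_{n+1} = x² p_n'' − x(2x − 1 − 2α) p_n' − ((2α+1)x − α²) p_n`. -/
noncomputable def pseq (α : ℂ) : ℕ → ℂ[X]
  | 0 => 1
  | n + 1 =>
      X ^ 2 * derivative (derivative (pseq α n))
        - X * (2 * X - C (1 + 2 * α)) * derivative (pseq α n)
        - (C (2 * α + 1) * X - C (α ^ 2)) * pseq α n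

/-- The monic normalization `P_n(x;α) = p_n(x;α) / ((−2)ⁿ (α+1/2)_n)`. -/
noncomputable def Pmonic (α : ℂ) (n : ℕ) : ℂ[X] :=
  ((-2 : ℂ) ^ n * (ascPochhammer ℂ n).eval (α + 1 / 2))⁻¹ • pseq α n

noncomputable def pseqOp (α : ℂ) : ℂ[X] →ₗ[ℂ] ℂ[X] :=
  LinearMap.mulLeft ℂ (X ^ 2) ∘ₗ derivative ∘ₗ derivative
    - LinearMap.mulLeft ℂ (X * (2 * X - C (1 + 2 * α))) ∘ₗ derivative
    - LinearMap.mulLeft ℂ (C (2 * α + 1) * X - C (α ^ 2))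

lemma pseq_succ (α : ℂ) (n : ℕ) : pseq α (n + 1) = pseqOp α (pseq α n) := rfl

lemma coeff_X_mul_derivative {R : Type*} [CommSemiring R] (q : R[X]) (m : ℕ) :
    (X * derivative q).coeff m = m * q.coeff m := by
  cases m with
  | zero => simp
  | succ m => rw [coeff_X_mul, coeff_derivative, mul_comm]; push_cast; ring

lemma X_mul_derivative_X_pow {R : Type*} [CommSemiring R] (k : ℕ) :
    X * derivative (X ^ k : R[X]) = C (k : R) * X ^ k := by
  ext m
  rw [coeff_X_mul_derivative, coeff_C_mul, coeff_X_pow]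
  split_ifs with h <;> simp [h]

-- `pseqOp` written through the Euler operator `θ = X * derivative`, which multiplies `X ^ m` by `m`
lemma pseqOp_apply (α : ℂ) (q : ℂ[X]) :
    pseqOp α q = X * derivative (X * derivative q) + C (2 * α) * (X * derivative q)
      - 2 * (X * (X * derivative q)) - C (2 * α + 1) * (X * q) + C (α ^ 2) * q := by
  have hX2 : X ^ 2 * derivative (derivative q) =
      X * derivative (X * derivative q) - X * derivative q := by
    simp only [derivative_mul, derivative_X, one_mul]
    ring
  simp only [pseqOp, LinearMap.sub_apply, LinearMap.comp_apply, LinearMap.mulLeft_apply, hX2,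
    C_add, C_mul, C_1]
  ring

lemma coeff_pseqOp_succ (α : ℂ) (q : ℂ[X]) (k : ℕ) :
    (pseqOp α q).coeff (k + 1)
      = ((k + 1 : ℂ) + α) ^ 2 * q.coeff (k + 1) - (2 * k + 2 * α + 1) * q.coeff k := by
  rw [pseqOp_apply]
  simp only [coeff_add, coeff_sub, coeff_C_mul, coeff_ofNat_mul, coeff_X_mul_derivative]
  simp only [coeff_X_mul, coeff_X_mul_derivative]
  push_cast
  ring

lemma pseqOp_X_pow (α : ℂ) (k : ℕ) :
    pseqOp α (X ^ k) = C (((k : ℂ) + α) ^ 2) * X ^ k - C (2 * k + 2 * α + 1) * X ^ (k + 1) := by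
  rw [pseqOp_apply, X_mul_derivative_X_pow, derivative_C_mul, mul_left_comm X,
    X_mul_derivative_X_pow]
  simp only [C_add, C_mul, C_pow, C_1, map_ofNat]
  ring

lemma coeff_pseq_of_lt (α : ℂ) {n k : ℕ} (h : n < k) : (pseq α n).coeff k = 0 := by
  induction n generalizing k with
  | zero => simp [pseq, coeff_one, h.ne']
  | succ n ih =>
    obtain ⟨k, rfl⟩ := Nat.exists_eq_add_of_lt h
    rw [pseq_succ, coeff_pseqOp_succ, ih (by omega), ih (by omega)]
    ring

lemma coeff_pseq_self (α : ℂ) (n : ℕ) :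
    (pseq α n).coeff n = (-2) ^ n * (ascPochhammer ℂ n).eval (α + 1 / 2) := by
  induction n with
  | zero => simp [pseq]
  | succ n ih =>
    rw [pseq_succ, coeff_pseqOp_succ, coeff_pseq_of_lt α n.lt_succ_self, ih,
      ascPochhammer_succ_eval]
    ring

lemma ascPochhammer_eval_ne_zero {R : Type*} [CommRing R] [IsDomain R] {r : R}
    (hr : ∀ k : ℕ, r + k ≠ 0) (n : ℕ) : (ascPochhammer R n).eval r ≠ 0 := by
  rw [Ne, ascPochhammer_eval_eq_zero_iff]
  rintro ⟨k, -, hk⟩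
  exact hr k (by rw [hk, add_neg_cancel])

lemma degree_pseq {α : ℂ} (hα : ∀ k : ℕ, α + 1 / 2 + k ≠ 0) (n : ℕ) : (pseq α n).degree = n := by
  refine degree_eq_of_le_of_coeff_ne_zero ?_ ?_
  · exact degree_le_iff_coeff_zero _ _ |>.mpr fun k hk => coeff_pseq_of_lt α (by exact_mod_cast hk)
  · rw [coeff_pseq_self]
    exact mul_ne_zero (pow_ne_zero _ (by norm_num)) (ascPochhammer_eval_ne_zero hα n)

lemma span_range_pseq {α : ℂ} (hα : ∀ k : ℕ, α + 1 / 2 + k ≠ 0) :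
    Submodule.span ℂ (Set.range (pseq α)) = ⊤ :=
  let S : Sequence ℂ := ⟨pseq α, degree_pseq hα⟩
  S.span fun n => (leadingCoeff_ne_zero.mpr (S.ne_zero n)).isUnit

lemma comp_pseqOp_eq_zero {α : ℂ} (hα : ∀ k : ℕ, α + 1 / 2 + k ≠ 0) (u : ℂ[X] →ₗ[ℂ] ℂ)
    (hu : ∀ k, u (pseq α (k + 1)) = 0) : u ∘ₗ pseqOp α = 0 :=
  LinearMap.ext_on_range (span_range_pseq hα) fun k => hu k

lemma moment_recurrence {α : ℂ} (hα : ∀ k : ℕ, α + 1 / 2 + k ≠ 0) (u : ℂ[X] →ₗ[ℂ] ℂ)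
    (hu : ∀ k, u (pseq α (k + 1)) = 0) (k : ℕ) :
    (2 * k + 2 * α + 1) * u (X ^ (k + 1)) = ((k : ℂ) + α) ^ 2 * u (X ^ k) := by
  have := LinearMap.congr_fun (comp_pseqOp_eq_zero hα u hu) (X ^ k)
  rw [LinearMap.comp_apply, pseqOp_X_pow, map_sub, ← smul_eq_C_mul, ← smul_eq_C_mul, map_smul,
    map_smul, smul_eq_mul, smul_eq_mul, LinearMap.zero_apply, sub_eq_zero] at this
  exact this.symm

lemma moment_eq_of_apply_pseq {α : ℂ} (hα : ∀ k : ℕ, α + 1 / 2 + k ≠ 0) (u : ℂ[X] →ₗ[ℂ] ℂ)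
    (h0 : u 1 = 1) (hu : ∀ k, u (pseq α (k + 1)) = 0) (n : ℕ) :
    u (X ^ n) =
      ((ascPochhammer ℂ n).eval α) ^ 2 / (2 ^ n * (ascPochhammer ℂ n).eval (α + 1 / 2)) := by
  induction n with
  | zero => simp [h0]
  | succ n ih =>
    have h2 : (2 : ℂ) ^ n ≠ 0 := pow_ne_zero n two_ne_zero
    have hB := ascPochhammer_eval_ne_zero hα n
    rw [eq_div_iff (mul_ne_zero h2 hB)] at ih
    rw [ascPochhammer_succ_eval, ascPochhammer_succ_eval, pow_succ (2 : ℂ),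
      eq_div_iff (mul_ne_zero (mul_ne_zero h2 two_ne_zero) (mul_ne_zero hB (hα n)))]
    linear_combination 2 ^ n * (ascPochhammer ℂ n).eval (α + 1 / 2) * moment_recurrence hα u hu n
      + ((n : ℂ) + α) ^ 2 * ih

lemma add_half_add_natCast_ne_zero {α : ℂ} (hα : -(1 / 2 : ℝ) < α.re) (k : ℕ) :
    α + 1 / 2 + k ≠ 0 := by
  intro h
  have := congrArg Complex.re h
  simp only [one_div, Complex.add_re, Complex.inv_re, Complex.re_ofNat, Complex.normSq_ofNat,
    div_self_mul_self', Complex.natCast_re, Complex.zero_re] at this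
  linarith [k.cast_nonneg (α := ℝ)]

lemma pseq_eq_smul_Pmonic {α : ℂ} (hα : ∀ k : ℕ, α + 1 / 2 + k ≠ 0) (n : ℕ) :
    pseq α n = ((-2 : ℂ) ^ n * (ascPochhammer ℂ n).eval (α + 1 / 2)) • Pmonic α n :=
  (smul_inv_smul₀ (mul_ne_zero (by simp) (ascPochhammer_eval_ne_zero hα n)) _).symm

theorem stmt14 (α : ℂ) (hα : -(1 / 2 : ℝ) < α.re) (u0 : ℂ[X] →ₗ[ℂ] ℂ)
    (hu0 : ∀ k : ℕ, u0 (Pmonic α k) = if k = 0 then 1 else 0) (n : ℕ) :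
    u0 (X ^ n)
      = ((ascPochhammer ℂ n).eval α) ^ 2 / (2 ^ n * (ascPochhammer ℂ n).eval (α + 1 / 2)) := by
  have hα' := add_half_add_natCast_ne_zero hα
  refine moment_eq_of_apply_pseq hα' u0 ?_ (fun k => ?_) n
  · simpa [Pmonic, pseq] using hu0 0
  · rw [pseq_eq_smul_Pmonic hα', map_smul, hu0]
    simp
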